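/- Let θ : (0, 1] → (0, 1] be a right continuous function such that every sequence (t_i) with θ(t_i) → 0 satisfies t_i → 0, and such that lim_{t→0} θ(t)/t = 0. Then for any ε > 0 there exist a number M and a decreasing sequence T_i → 0 such that log(1/θ(T_i)) ≤ ε · ∫_{T_i}^1 dr/θ(r) + M for every i ≥ 1. -/

import Mathlib

open MeasureTheory Set Filter
open scoped ENNReal Topology

set_option maxHeartbeats 1000000 in
/-- **Lemma 5.1 of Rajala.** Let `θ : (0, 1] → (0, 1]` be a right-continuous function
such that every sequence `(t_i)` in `(0, 1]` with `θ(t_i) → 0` satisfies `t_i → 0`, and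
such that `lim_{t→0+} θ(t)/t = 0`. Then for any `ε > 0` there exist a number `M` and a
decreasing sequence `T_i → 0` in `(0, 1]` such that
`log(1/θ(T_i)) ≤ ε · ∫_{T_i}^1 dr/θ(r) + M` for every `i`, where the integral is the
Lebesgue integral of `1/θ` over `[T_i, 1]`. -/
theorem log_one_div_theta_le_of_rightContinuous
    (θ : ℝ → ℝ)
    (hmap : ∀ t ∈ Set.Ioc (0:ℝ) 1, θ t ∈ Set.Ioc (0:ℝ) 1)
    (hrc : ∀ t ∈ Set.Ioc (0:ℝ) 1, ContinuousWithinAt θ (Set.Ici t) t)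
    (hseq : ∀ t : ℕ → ℝ, (∀ i, t i ∈ Set.Ioc (0:ℝ) 1) →
      Tendsto (fun i => θ (t i)) atTop (𝓝 0) → Tendsto t atTop (𝓝 0))
    (hlim : Tendsto (fun t => θ t / t) (𝓝[>] (0:ℝ)) (𝓝 0)) :
    ∀ ε : ℝ, 0 < ε → ∃ (M : ℝ) (T : ℕ → ℝ),
      (∀ i, T i ∈ Set.Ioc (0:ℝ) 1) ∧ StrictAnti T ∧ Tendsto T atTop (𝓝 0) ∧
      ∀ i : ℕ, ENNReal.ofReal (Real.log (1 / θ (T i))) ≤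
        ENNReal.ofReal ε * (∫⁻ r in Set.Icc (T i) 1, ENNReal.ofReal (1 / θ r)) +
          ENNReal.ofReal M := by
  intro ε hε
  have hθpos : ∀ t ∈ Set.Ioc (0:ℝ) 1, 0 < θ t := fun t ht => (hmap t ht).1
  -- the integrand
  set f : ℝ → ℝ≥0∞ := fun r => ENNReal.ofReal (1 / θ r) with hfdef
  -- measurability of `f` on `(0,1]`
  have hf_meas : AEMeasurable f (volume.restrict (Set.Ioc (0:ℝ) 1)) := by
    set θ' : ℝ → ℝ := fun r => if r ∈ Set.Ioc (0:ℝ) 1 then θ r else 1 with hθ'def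
    have hg_n : ∀ n : ℕ, Measurable (fun r : ℝ => θ' ((⌈r * 2 ^ n⌉ : ℤ) / 2 ^ n)) := by
      intro n
      exact (measurable_from_top (f := fun z : ℤ => θ' ((z : ℝ) / 2 ^ n))).comp
        ((measurable_id.mul_const _).ceil)
    have hconv : ∀ t ∈ Set.Ioc (0:ℝ) 1,
        Tendsto (fun n : ℕ => θ' ((⌈t * 2 ^ n⌉ : ℤ) / 2 ^ n)) atTop (𝓝 (θ' t)) := by
      intro t ht
      set x : ℕ → ℝ := fun n => ((⌈t * 2 ^ n⌉ : ℤ) : ℝ) / 2 ^ n with hxdef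
      have h2pos : ∀ n : ℕ, (0:ℝ) < 2 ^ n := fun n => by positivity
      have hxge : ∀ n, t ≤ x n := by
        intro n
        rw [hxdef, le_div_iff₀ (h2pos n)]
        exact Int.le_ceil _
      have hxle : ∀ n, x n ≤ t + (2 ^ n)⁻¹ := by
        intro n
        rw [hxdef, div_le_iff₀ (h2pos n)]
        have := (Int.ceil_lt_add_one (t * 2 ^ n)).le
        calc ((⌈t * 2 ^ n⌉ : ℤ) : ℝ) ≤ t * 2 ^ n + 1 := this
          _ = (t + (2 ^ n)⁻¹) * 2 ^ n := by field_simp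
      have hxmem : ∀ n, x n ∈ Set.Ioc (0:ℝ) 1 := by
        intro n
        constructor
        · exact lt_of_lt_of_le ht.1 (hxge n)
        · rw [hxdef, div_le_one (h2pos n)]
          have : (⌈t * 2 ^ n⌉ : ℤ) ≤ ⌈((2:ℝ) ^ n)⌉ := by
            apply Int.ceil_le_ceil
            nlinarith [ht.2, h2pos n]
          have h2 : (⌈((2:ℝ) ^ n)⌉ : ℤ) = 2 ^ n := by
            rw [show ((2:ℝ) ^ n) = (((2:ℤ) ^ n : ℤ) : ℝ) by push_cast; ring, Int.ceil_intCast]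
          calc ((⌈t * 2 ^ n⌉ : ℤ) : ℝ) ≤ ((⌈((2:ℝ) ^ n)⌉ : ℤ) : ℝ) := by exact_mod_cast this
            _ = 2 ^ n := by rw [h2]; push_cast; ring
      have hxtend : Tendsto x atTop (𝓝[Set.Ici t] t) := by
        rw [tendsto_nhdsWithin_iff]
        constructor
        · have hsq : Tendsto (fun n : ℕ => t + ((2:ℝ) ^ n)⁻¹) atTop (𝓝 (t + 0)) := by
            apply tendsto_const_nhds.add
            exact tendsto_inv_atTop_zero.comp (tendsto_pow_atTop_atTop_of_one_lt one_lt_two)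
          rw [add_zero] at hsq
          exact tendsto_of_tendsto_of_tendsto_of_le_of_le tendsto_const_nhds hsq hxge hxle
        · exact Eventually.of_forall fun n => hxge n
      have heq : ∀ n, θ' (x n) = θ (x n) := fun n => if_pos (hxmem n)
      have heqt : θ' t = θ t := if_pos ht
      rw [heqt]
      have := (hrc t ht).tendsto.comp hxtend
      exact this.congr fun n => (heq n).symm
    have hae : AEMeasurable θ' (volume.restrict (Set.Ioc (0:ℝ) 1)) := by
      refine aemeasurable_of_tendsto_metrizable_ae atTop (fun n => (hg_n n).aemeasurable) ?_
      exact (ae_restrict_iff' measurableSet_Ioc).mpr (Eventually.of_forall hconv)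
    have haeθ : AEMeasurable θ (volume.restrict (Set.Ioc (0:ℝ) 1)) := by
      refine hae.congr ?_
      exact (ae_restrict_iff' measurableSet_Ioc).mpr (Eventually.of_forall fun r hr => if_pos hr)
    have : AEMeasurable (fun r => 1 / θ r) (volume.restrict (Set.Ioc (0:ℝ) 1)) := by
      exact haeθ.const_div 1
    exact ENNReal.measurable_ofReal.comp_aemeasurable this
  obtain ⟨g, hg_meas, hfg⟩ : ∃ g : ℝ → ℝ≥0∞, Measurable g ∧
      f =ᵐ[volume.restrict (Set.Ioc (0:ℝ) 1)] g :=
    ⟨hf_meas.mk f, hf_meas.measurable_mk, hf_meas.ae_eq_mk⟩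
  set ν : Measure ℝ := (volume.restrict (Set.Ioc (0:ℝ) 1)).withDensity g with hνdef
  have hν : ∀ B : Set ℝ, MeasurableSet B →
      ν B = ∫⁻ r in B ∩ Set.Ioc (0:ℝ) 1, g r := by
    intro B hB
    rw [hνdef, withDensity_apply _ hB, Measure.restrict_restrict hB]
  have hνsub : ∀ B : Set ℝ, MeasurableSet B → B ⊆ Set.Ioc (0:ℝ) 1 →
      ν B = ∫⁻ r in B, g r := by
    intro B hB hBsub
    rw [hν B hB, Set.inter_eq_self_of_subset_left hBsub]
  -- integrals over sets inside `(0,1]` of `f` and `g` agree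
  have hfg' : ∀ B : Set ℝ, MeasurableSet B → B ⊆ Set.Ioc (0:ℝ) 1 →
      (∫⁻ r in B, f r) = ∫⁻ r in B, g r := by
    intro B hB hBsub
    have : volume.restrict B = (volume.restrict (Set.Ioc (0:ℝ) 1)).restrict B := by
      rw [Measure.restrict_restrict hB, Set.inter_eq_self_of_subset_left hBsub]
    rw [this]
    exact lintegral_congr_ae (hfg.filter_mono (ae_mono Measure.restrict_le_self))
  have hFν : ∀ t ∈ Set.Ioc (0:ℝ) 1,
      (∫⁻ r in Set.Icc t 1, f r) = ν (Set.Icc t 1) := by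
    intro t ht
    have hsub : Set.Icc t 1 ⊆ Set.Ioc (0:ℝ) 1 := fun r hr => ⟨lt_of_lt_of_le ht.1 hr.1, hr.2⟩
    rw [hfg' _ measurableSet_Icc hsub, hνsub _ measurableSet_Icc hsub]
  by_cases hfin : ∀ t ∈ Set.Ioc (0:ℝ) 1, ν (Set.Icc t 1) ≠ ∞
  case neg =>
    -- trivial case: some integral is infinite
    push_neg at hfin
    obtain ⟨c, hc, hcinf⟩ := hfin
    have hc1 : 0 < c := hc.1
    refine ⟨0, fun i => c * (2⁻¹ : ℝ) ^ i, ?_, ?_, ?_, ?_⟩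
    · intro i
      constructor
      · positivity
      · calc c * (2⁻¹:ℝ) ^ i ≤ c * 1 := by
              apply mul_le_mul_of_nonneg_left _ hc1.le
              exact pow_le_one₀ (by norm_num) (by norm_num)
          _ ≤ 1 := by rw [mul_one]; exact hc.2
    · apply strictAnti_nat_of_succ_lt
      intro n
      simp only [pow_succ]
      nlinarith [pow_pos (by norm_num : (0:ℝ) < 2⁻¹) n]
    · have := (tendsto_pow_atTop_nhds_zero_of_lt_one (by norm_num : (0:ℝ) ≤ 2⁻¹)
        (by norm_num : (2⁻¹:ℝ) < 1)).const_mul c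
      simpa using this
    · intro i
      have hTle : c * (2⁻¹:ℝ) ^ i ≤ c := by
        calc c * (2⁻¹:ℝ) ^ i ≤ c * 1 := by
              apply mul_le_mul_of_nonneg_left _ hc1.le
              exact pow_le_one₀ (by norm_num) (by norm_num)
          _ = c := mul_one c
      have hsub : Set.Icc c 1 ⊆ Set.Icc (c * (2⁻¹:ℝ) ^ i) 1 := Set.Icc_subset_Icc hTle le_rfl
      have h1 : (∫⁻ r in Set.Icc (c * (2⁻¹:ℝ) ^ i) 1, f r) = ⊤ := by
        rw [eq_top_iff]
        calc (⊤:ℝ≥0∞) = ν (Set.Icc c 1) := hcinf.symm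
          _ = ∫⁻ r in Set.Icc c 1, f r := (hFν c hc).symm
          _ ≤ ∫⁻ r in Set.Icc (c * (2⁻¹:ℝ) ^ i) 1, f r := lintegral_mono_set hsub
      simp only [h1]
      rw [ENNReal.mul_top (ENNReal.ofReal_pos.mpr hε).ne']
      exact le_top
  case pos =>
  -- main case: all the integrals are finite
  set Fr : ℝ → ℝ := fun t => (ν (Set.Icc t 1)).toReal with hFrdef
  have hFr_anti : ∀ t s : ℝ, 0 < t → t ≤ s → s ≤ 1 → Fr s ≤ Fr t := by
    intro t s ht hts hs1
    apply ENNReal.toReal_mono (hfin t ⟨ht, hts.trans hs1⟩)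
    exact measure_mono (Set.Icc_subset_Icc_left hts)
  have hdisj : ∀ t s : ℝ, Disjoint (Set.Ico t s) (Set.Icc s 1) := by
    intro t s
    rw [Set.disjoint_left]
    rintro r ⟨_, hr2⟩ ⟨hr3, _⟩
    exact absurd hr3 (not_le.mpr hr2)
  have hsplit : ∀ t s : ℝ, 0 < t → t ≤ s → s ≤ 1 →
      ν (Set.Icc t 1) = ν (Set.Ico t s) + ν (Set.Icc s 1) := by
    intro t s ht hts hs1
    rw [← Set.Ico_union_Icc_eq_Icc hts hs1]
    exact measure_union (hdisj t s) measurableSet_Icc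
  have hIcofin : ∀ t s : ℝ, 0 < t → t ≤ s → s ≤ 1 → ν (Set.Ico t s) ≠ ∞ := by
    intro t s ht hts hs1
    refine ne_top_of_le_ne_top (hfin t ⟨ht, hts.trans hs1⟩) (measure_mono ?_)
    exact fun r hr => ⟨hr.1, (hr.2.le.trans hs1)⟩
  have hFrsub : ∀ t s : ℝ, 0 < t → t ≤ s → s ≤ 1 →
      Fr t - Fr s = (ν (Set.Ico t s)).toReal := by
    intro t s ht hts hs1
    have h1 := hsplit t s ht hts hs1
    have h2 : ν (Set.Icc s 1) ≠ ∞ := hfin s ⟨ht.trans_le hts, hs1⟩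
    have h3 : ν (Set.Ico t s) ≠ ∞ := hIcofin t s ht hts hs1
    simp only [hFrdef, h1, ENNReal.toReal_add h3 h2]
    ring
  -- get `δ` from `hlim`
  obtain ⟨δ, hδpos, hδ⟩ : ∃ δ > 0, ∀ t : ℝ, 0 < t → t < δ → θ t / t < ε / 2 := by
    have h1 : {t : ℝ | θ t / t < ε / 2} ∈ 𝓝[>] (0:ℝ) := hlim (Iio_mem_nhds (half_pos hε))
    rw [Metric.mem_nhdsWithin_iff] at h1
    obtain ⟨δ, hδpos, hδ⟩ := h1
    refine ⟨δ, hδpos, fun t ht htδ => ?_⟩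
    apply hδ
    constructor
    · simp only [Metric.mem_ball, Real.dist_eq, sub_zero, abs_of_pos ht]
      exact htδ
    · exact ht
  set δ₀ : ℝ := min δ 1 / 2 with hδ₀def
  have hδ₀pos : 0 < δ₀ := by positivity
  have hδ₀lt : δ₀ < δ := by
    have : min δ 1 ≤ δ := min_le_left _ _
    have h2 : min δ 1 / 2 < min δ 1 := by
      have := lt_min hδpos one_pos
      linarith
    linarith
  have hδ₀le : δ₀ ≤ 1/2 := by
    have : min δ 1 ≤ 1 := min_le_right _ _
    simp only [hδ₀def]
    linarith
  have hδ₀le1 : δ₀ ≤ 1 := by linarith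
  -- lower bound for Fr coming from `hlim`
  have hlow : ∀ t ∈ Set.Ioc (0:ℝ) δ₀, (2/ε) * Real.log (δ₀ / t) ≤ Fr t := by
    intro t ht
    have htpos := ht.1
    have htδ₀ := ht.2
    have hsub1 : Set.Icc t δ₀ ⊆ Set.Ioc (0:ℝ) 1 := fun r hr =>
      ⟨lt_of_lt_of_le htpos hr.1, hr.2.trans hδ₀le1⟩
    have hlb : ∀ r ∈ Set.Icc t δ₀, ENNReal.ofReal ((2/ε) * r⁻¹) ≤ f r := by
      intro r hr
      have hrpos : 0 < r := lt_of_lt_of_le htpos hr.1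
      have hrδ : r < δ := lt_of_le_of_lt hr.2 hδ₀lt
      have h1 : θ r / r < ε / 2 := hδ r hrpos hrδ
      have hθr : 0 < θ r := hθpos r (hsub1 hr)
      have h2 : θ r ≤ ε / 2 * r := by rw [div_lt_iff₀ hrpos] at h1; linarith
      apply ENNReal.ofReal_le_ofReal
      rw [one_div]
      calc (2/ε) * r⁻¹ = (ε / 2 * r)⁻¹ := by rw [mul_inv, inv_div]
        _ ≤ (θ r)⁻¹ := by gcongr
    have key1 : (∫⁻ r in Set.Icc t δ₀, ENNReal.ofReal ((2/ε) * r⁻¹)) ≤ ν (Set.Icc t 1) := by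
      calc (∫⁻ r in Set.Icc t δ₀, ENNReal.ofReal ((2/ε) * r⁻¹))
          ≤ ∫⁻ r in Set.Icc t δ₀, f r := lintegral_mono_ae
            ((ae_restrict_iff' measurableSet_Icc).mpr (Eventually.of_forall hlb))
        _ = ∫⁻ r in Set.Icc t δ₀, g r := hfg' _ measurableSet_Icc hsub1
        _ = ν (Set.Icc t δ₀) := (hνsub _ measurableSet_Icc hsub1).symm
        _ ≤ ν (Set.Icc t 1) := measure_mono (Set.Icc_subset_Icc le_rfl hδ₀le1)
    have key2 : (∫⁻ r in Set.Icc t δ₀, ENNReal.ofReal ((2/ε) * r⁻¹))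
        = ENNReal.ofReal ((2/ε) * Real.log (δ₀ / t)) := by
      have hint : IntegrableOn (fun r : ℝ => (2/ε) * r⁻¹) (Set.Icc t δ₀) := by
        apply ContinuousOn.integrableOn_Icc
        apply ContinuousOn.mul continuousOn_const
        exact ContinuousOn.inv₀ continuousOn_id
          (fun x hx => ne_of_gt (lt_of_lt_of_le htpos hx.1))
      rw [← ofReal_integral_eq_lintegral_ofReal hint]
      · congr 1
        rw [MeasureTheory.integral_Icc_eq_integral_Ioc,
          ← intervalIntegral.integral_of_le htδ₀,
          intervalIntegral.integral_const_mul, integral_inv_of_pos htpos hδ₀pos]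
      · refine (ae_restrict_iff' measurableSet_Icc).mpr (Eventually.of_forall fun r hr => ?_)
        have hrpos : 0 < r := lt_of_lt_of_le htpos hr.1
        positivity
    have hlog : 0 ≤ (2/ε) * Real.log (δ₀ / t) := by
      have : (1:ℝ) ≤ δ₀ / t := (one_le_div htpos).mpr htδ₀
      have := Real.log_nonneg this
      positivity
    have h3 := ENNReal.toReal_mono (hfin t ⟨htpos, htδ₀.trans hδ₀le1⟩) (key2 ▸ key1)
    rw [ENNReal.toReal_ofReal hlog] at h3
    exact h3
  -- continuity of Fr on (0,1)
  have hcont : ∀ s ∈ Set.Ioo (0:ℝ) 1, ContinuousAt Fr s := by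
    intro s hs
    have hs0 : 0 < s := hs.1
    have hs1 : s < 1 := hs.2
    rw [Metric.continuousAt_iff]
    intro ε' hε'
    set m : ℝ := min (s/2) ((1-s)/2) with hmdef
    have hmpos : 0 < m := lt_min (by positivity) (by linarith)
    have hms : m ≤ s/2 := min_le_left _ _
    have hms' : m ≤ (1-s)/2 := min_le_right _ _
    set b : ℕ → ℝ := fun n => min m (1/(n+1)) with hbdef
    have hbpos : ∀ n, 0 < b n := fun n => lt_min hmpos (by positivity)
    have hbm : ∀ n, b n ≤ m := fun n => min_le_left _ _
    have hbanti : Antitone b := by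
      intro i j hij
      apply min_le_min le_rfl
      apply one_div_le_one_div_of_le (by positivity)
      have : (i:ℝ) ≤ j := Nat.cast_le.mpr hij
      linarith
    set A : ℕ → Set ℝ := fun n => Set.Icc (s - b n) (s + b n) with hAdef
    have hAanti : Antitone A := fun i j hij =>
      Set.Icc_subset_Icc (by linarith [hbanti hij]) (by linarith [hbanti hij])
    have hAsub : ∀ n, A n ∩ Set.Ioc (0:ℝ) 1 ⊆ Set.Icc (s/2) 1 := by
      rintro n r ⟨hr1, hr2⟩
      refine ⟨?_, hr2.2⟩
      have := hbm n
      have := hr1.1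
      linarith
    have hIccfin : ν (Set.Icc (s/2) 1) ≠ ∞ := hfin (s/2) ⟨by positivity, by linarith⟩
    have hAfin : ∀ n, ν (A n) ≠ ∞ := by
      intro n
      rw [hν _ measurableSet_Icc]
      refine ne_top_of_le_ne_top hIccfin ?_
      rw [hνsub _ measurableSet_Icc (fun r hr => ⟨by linarith [hr.1], hr.2⟩)]
      exact lintegral_mono_set (hAsub n)
    have hInter : ⋂ n, A n = {s} := by
      ext x
      simp only [Set.mem_iInter, Set.mem_singleton_iff, hAdef, Set.mem_Icc]
      constructor
      · intro h
        by_contra hne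
        have hpos : 0 < |x - s| := abs_pos.mpr (sub_ne_zero.mpr hne)
        obtain ⟨n, hn⟩ := exists_nat_one_div_lt hpos
        have hb : b n ≤ 1/(n+1) := min_le_right _ _
        have habs : |x - s| ≤ b n :=
          abs_le.mpr ⟨by linarith [(h n).1], by linarith [(h n).2]⟩
        linarith
      · intro h
        subst h
        exact fun n => ⟨by linarith [hbpos n], by linarith [hbpos n]⟩
    have hνs : ν {s} = 0 := by
      have hμs : (volume.restrict (Set.Ioc (0:ℝ) 1)) {s} = 0 := by
        rw [Measure.restrict_apply (measurableSet_singleton s)]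
        exact measure_mono_null Set.inter_subset_left Real.volume_singleton
      exact withDensity_absolutelyContinuous _ _ hμs
    have htend : Tendsto (fun n => ν (A n)) atTop (𝓝 0) := by
      have h0 := tendsto_measure_iInter_atTop (μ := ν)
        (fun n => measurableSet_Icc.nullMeasurableSet) hAanti ⟨0, hAfin 0⟩
      rw [hInter, hνs] at h0
      exact h0
    have hev : ∀ᶠ n in atTop, ν (A n) < ENNReal.ofReal ε' :=
      htend.eventually (Filter.Tendsto.eventually_lt_const (ENNReal.ofReal_pos.mpr hε') tendsto_id)
    obtain ⟨n, hn⟩ := hev.exists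
    refine ⟨b n, hbpos n, ?_⟩
    intro x hx
    rw [Real.dist_eq] at hx
    have hx1 : s - b n < x := by
      rw [abs_sub_lt_iff] at hx
      linarith [hx.2]
    have hx2 : x < s + b n := by
      rw [abs_sub_lt_iff] at hx
      linarith [hx.1]
    have hx0 : 0 < x := by have := hbm n; linarith
    have hxle1 : x ≤ 1 := by have := hbm n; linarith
    have hfinA : (ν (A n)).toReal < ε' := by
      have hne : ν (A n) ≠ ⊤ := hn.ne_top
      exact (ENNReal.lt_ofReal_iff_toReal_lt hne).mp hn
    rw [Real.dist_eq]
    rcases le_total x s with hxs | hsx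
    · have h1 : Fr x - Fr s = (ν (Set.Ico x s)).toReal := hFrsub x s hx0 hxs hs1.le
      have h2 : Fr s ≤ Fr x := hFr_anti x s hx0 hxs hs1.le
      rw [abs_of_nonneg (by linarith), h1]
      calc (ν (Set.Ico x s)).toReal ≤ (ν (A n)).toReal := by
            apply ENNReal.toReal_mono hn.ne_top
            apply measure_mono
            intro r hr
            exact ⟨by linarith [hr.1], by linarith [hr.2]⟩
        _ < ε' := hfinA
    · have h1 : Fr s - Fr x = (ν (Set.Ico s x)).toReal := hFrsub s x hs0 hsx hxle1
      have h2 : Fr x ≤ Fr s := hFr_anti s x hs0 hsx hxle1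
      rw [abs_of_nonpos (by linarith), neg_sub, h1]
      calc (ν (Set.Ico s x)).toReal ≤ (ν (A n)).toReal := by
            apply ENNReal.toReal_mono hn.ne_top
            apply measure_mono
            intro r hr
            exact ⟨by linarith [hr.1], by linarith [hr.2]⟩
        _ < ε' := hfinA
  set M : ℝ := max 1 (Real.log (4 / (ε * δ₀ ^ 2))) with hMdef
  have hM0 : 0 ≤ M := le_trans zero_le_one (le_max_left _ _)
  have hMexp : Real.exp (-M) ≤ ε * δ₀ ^ 2 / 4 := by
    have hpos : (0:ℝ) < ε * δ₀ ^ 2 / 4 := by positivity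
    have h1 : Real.log (4 / (ε * δ₀ ^ 2)) = - Real.log (ε * δ₀ ^ 2 / 4) := by
      rw [← Real.log_inv]
      congr 1
      field_simp
    have h2 : -M ≤ Real.log (ε * δ₀ ^ 2 / 4) := by
      have h3 : Real.log (4 / (ε * δ₀ ^ 2)) ≤ M := le_max_right _ _
      rw [h1] at h3
      linarith
    calc Real.exp (-M) ≤ Real.exp (Real.log (ε * δ₀ ^ 2 / 4)) := Real.exp_le_exp.mpr h2
      _ = ε * δ₀ ^ 2 / 4 := Real.exp_log hpos
  -- the key claim
  have key : ∀ a ∈ Set.Ioc (0:ℝ) δ₀, ∃ T ∈ Set.Ioc (0:ℝ) a,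
      Real.log (1 / θ T) ≤ ε * Fr T + M := by
    intro a ha
    by_contra hcon
    push_neg at hcon
    have ha0 : 0 < a := ha.1
    have haδ₀ : a ≤ δ₀ := ha.2
    have ha1 : a ≤ 1 := haδ₀.trans hδ₀le1
    have hθsmall : ∀ r ∈ Set.Ioc (0:ℝ) a, θ r < Real.exp (-(ε * Fr r + M)) := by
      intro r hr
      have hrI : r ∈ Set.Ioc (0:ℝ) 1 := ⟨hr.1, hr.2.trans ha1⟩
      have hθr : 0 < θ r := hθpos r hrI
      have h1 := hcon r hr
      have h2 : Real.exp (ε * Fr r + M) < (θ r)⁻¹ := by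
        have h3 := Real.exp_lt_exp.mpr h1
        rw [Real.exp_log (by positivity : (0:ℝ) < 1 / θ r), one_div] at h3
        exact h3
      have h4 := inv_strictAnti₀ (Real.exp_pos _) h2
      rw [inv_inv] at h4
      rwa [Real.exp_neg]
    have hinc : ∀ t s : ℝ, 0 < t → t ≤ s → s ≤ a →
        Real.exp (ε * Fr s + M) * (s - t) ≤ Fr t - Fr s := by
      intro t s ht hts hsa
      have hs1' : s ≤ 1 := hsa.trans ha1
      have hsub : Set.Ico t s ⊆ Set.Ioc (0:ℝ) 1 := fun r hr =>
        ⟨lt_of_lt_of_le ht hr.1, hr.2.le.trans hs1'⟩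
      have hlb : ∀ r ∈ Set.Ico t s, ENNReal.ofReal (Real.exp (ε * Fr s + M)) ≤ f r := by
        intro r hr
        have hrI : r ∈ Set.Ioc (0:ℝ) a := ⟨lt_of_lt_of_le ht hr.1, hr.2.le.trans hsa⟩
        have hθr : 0 < θ r := hθpos r ⟨hrI.1, hrI.2.trans ha1⟩
        have hFrr : Fr s ≤ Fr r := hFr_anti r s hrI.1 hr.2.le hs1'
        have h1 : θ r < Real.exp (-(ε * Fr s + M)) := by
          refine lt_of_lt_of_le (hθsmall r hrI) (Real.exp_le_exp.mpr ?_)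
          have := mul_le_mul_of_nonneg_left hFrr hε.le
          linarith
        apply ENNReal.ofReal_le_ofReal
        rw [one_div]
        rw [Real.exp_neg] at h1
        calc Real.exp (ε * Fr s + M) = ((Real.exp (ε * Fr s + M))⁻¹)⁻¹ := (inv_inv _).symm
          _ ≤ (θ r)⁻¹ := inv_anti₀ hθr h1.le
      have h2 : ENNReal.ofReal (Real.exp (ε * Fr s + M)) * volume (Set.Ico t s)
          ≤ ν (Set.Ico t s) := by
        rw [hνsub _ measurableSet_Ico hsub]
        calc ENNReal.ofReal (Real.exp (ε * Fr s + M)) * volume (Set.Ico t s)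
            = ∫⁻ _ in Set.Ico t s, ENNReal.ofReal (Real.exp (ε * Fr s + M)) :=
              (setLIntegral_const _ _).symm
          _ ≤ ∫⁻ r in Set.Ico t s, f r := lintegral_mono_ae
              ((ae_restrict_iff' measurableSet_Ico).mpr (Eventually.of_forall hlb))
          _ = ∫⁻ r in Set.Ico t s, g r := hfg' _ measurableSet_Ico hsub
      rw [Real.volume_Ico] at h2
      have h3 : ENNReal.ofReal (Real.exp (ε * Fr s + M) * (s - t)) ≤ ν (Set.Ico t s) := by
        rw [ENNReal.ofReal_mul (Real.exp_pos _).le]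
        exact h2
      have h4 := ENNReal.toReal_mono (hIcofin t s ht hts hs1') h3
      rw [ENNReal.toReal_ofReal (mul_nonneg (Real.exp_pos _).le (sub_nonneg.mpr hts))] at h4
      rw [hFrsub t s ht hts hs1']
      exact h4
    set S : ℕ → Set ℝ := fun k => {t | t ∈ Set.Ioc (0:ℝ) a ∧ Fr a + k/ε ≤ Fr t} with hSdef
    have hSbdd : ∀ k, BddAbove (S k) := fun k => ⟨a, fun t ht => ht.1.2⟩
    have hSne : ∀ k : ℕ, (S k).Nonempty := by
      intro k
      set X : ℝ := (ε/2) * (Fr a + k/ε) with hXdef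
      set t₀ : ℝ := min a (δ₀ * Real.exp (-X)) with ht₀def
      have ht₀pos : 0 < t₀ := lt_min ha0 (by positivity)
      have ht₀a : t₀ ≤ a := min_le_left _ _
      refine ⟨t₀, ⟨ht₀pos, ht₀a⟩, ?_⟩
      have h1 := hlow t₀ ⟨ht₀pos, ht₀a.trans haδ₀⟩
      have h2 : Real.exp X ≤ δ₀ / t₀ := by
        rw [le_div_iff₀ ht₀pos]
        calc Real.exp X * t₀ ≤ Real.exp X * (δ₀ * Real.exp (-X)) :=
              mul_le_mul_of_nonneg_left (min_le_right _ _) (Real.exp_pos _).le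
          _ = δ₀ * (Real.exp X * Real.exp (-X)) := by ring
          _ = δ₀ := by rw [← Real.exp_add, add_neg_cancel, Real.exp_zero, mul_one]
      have h3 : X ≤ Real.log (δ₀ / t₀) := by
        have h4 := Real.log_le_log (Real.exp_pos _) h2
        rwa [Real.log_exp] at h4
      have hX1 : (2/ε) * (ε/2) = 1 := by field_simp
      calc Fr a + k/ε = (2/ε) * X := by rw [hXdef, ← mul_assoc, hX1, one_mul]
        _ ≤ (2/ε) * Real.log (δ₀ / t₀) := mul_le_mul_of_nonneg_left h3 (by positivity)
        _ ≤ Fr t₀ := h1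
    set c : ℕ → ℝ := fun k => sSup (S k) with hcdef
    have hca : ∀ k, c k ≤ a := fun k => csSup_le (hSne k) (fun t ht => ht.1.2)
    have hcpos : ∀ k, 0 < c k := by
      intro k
      obtain ⟨t, ht⟩ := hSne k
      exact lt_of_lt_of_le ht.1.1 (le_csSup (hSbdd k) ht)
    have hcIoo : ∀ k, c k ∈ Set.Ioo (0:ℝ) 1 :=
      fun k => ⟨hcpos k, lt_of_le_of_lt ((hca k).trans haδ₀) (lt_of_le_of_lt hδ₀le (by norm_num))⟩
    have hc_ge : ∀ k : ℕ, Fr a + k/ε ≤ Fr (c k) := by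
      intro k
      obtain ⟨u, _, hu_tend, hu_mem⟩ := exists_seq_tendsto_sSup (hSne k) (hSbdd k)
      have hFrc := (hcont (c k) (hcIoo k)).tendsto.comp hu_tend
      exact ge_of_tendsto hFrc (Eventually.of_forall fun n => (hu_mem n).2)
    have hc_le : ∀ k : ℕ, Fr (c k) ≤ Fr a + k/ε := by
      intro k
      rcases eq_or_lt_of_le (hca k) with heq | hlt
      · rw [heq]
        have : (0:ℝ) ≤ (k:ℝ)/ε := by positivity
        linarith
      · set u : ℕ → ℝ := fun n => c k + (a - c k)/(n+1) with hudef
        have hu_tend : Tendsto u atTop (𝓝 (c k)) := by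
          have h0 : Tendsto (fun n : ℕ => (a - c k) * (1/(n+1))) atTop (𝓝 ((a - c k) * 0)) :=
            tendsto_one_div_add_atTop_nhds_zero_nat.const_mul (a - c k)
          rw [mul_zero] at h0
          have h1 := tendsto_const_nhds.add h0 (f := fun _ : ℕ => c k) (x := atTop)
          rw [add_zero] at h1
          convert h1 using 2 with n
          rw [hudef]
          ring
        have hFrc := (hcont (c k) (hcIoo k)).tendsto.comp hu_tend
        apply le_of_tendsto hFrc
        apply Eventually.of_forall
        intro n
        have hn1 : (0:ℝ) < (n:ℝ) + 1 := by positivity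
        have hun1 : c k < u n := by
          rw [hudef]
          have : 0 < (a - c k)/(n+1) := div_pos (by linarith) hn1
          simp only []
          linarith
        have hun2 : u n ≤ a := by
          rw [hudef]
          have h5 : (a - c k)/(n+1) ≤ (a - c k) := by
            rw [div_le_iff₀ hn1]
            nlinarith
          simp only []
          linarith
        have hnotmem : u n ∉ S k := fun hmem => absurd (le_csSup (hSbdd k) hmem) (not_le.mpr hun1)
        by_contra h'
        exact hnotmem ⟨⟨lt_trans (hcpos k) hun1, hun2⟩, (not_le.mp h').le⟩
    have hc0 : c 0 = a := by
      refine le_antisymm (hca 0) (le_csSup (hSbdd 0) ⟨⟨ha0, le_refl a⟩, by simp⟩)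
    have hcmono : ∀ k, c (k+1) ≤ c k := by
      intro k
      apply csSup_le_csSup (hSbdd k) (hSne (k+1))
      intro t ht
      refine ⟨ht.1, le_trans ((add_le_add_iff_left (Fr a)).mpr ?_) ht.2⟩
      gcongr
      push_cast
      linarith
    have hgap : ∀ k : ℕ, c k - c (k+1) ≤
        (1/ε) * Real.exp (-(ε * Fr a + M)) * Real.exp (-(1:ℝ)) ^ k := by
      intro k
      have h1 := hinc (c (k+1)) (c k) (hcpos (k+1)) (hcmono k) (hca k)
      have h2 : Fr (c (k+1)) - Fr (c k) ≤ 1/ε := by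
        have ha' := hc_le (k+1)
        have hb' := hc_ge k
        have hc' : ((k:ℝ)+1)/ε = (k:ℝ)/ε + 1/ε := by ring
        push_cast at ha'
        linarith
      have h3 : Real.exp (ε * Fr a + k + M) ≤ Real.exp (ε * Fr (c k) + M) := by
        apply Real.exp_le_exp.mpr
        have h5 := mul_le_mul_of_nonneg_left (hc_ge k) hε.le
        have hek : ε * ((k:ℝ)/ε) = (k:ℝ) := by field_simp
        nlinarith
      have h4 : Real.exp (ε * Fr a + k + M) * (c k - c (k+1)) ≤ 1/ε := by
        have hnn : 0 ≤ c k - c (k+1) := sub_nonneg.mpr (hcmono k)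
        calc Real.exp (ε * Fr a + k + M) * (c k - c (k+1))
            ≤ Real.exp (ε * Fr (c k) + M) * (c k - c (k+1)) :=
              mul_le_mul_of_nonneg_right h3 hnn
          _ ≤ Fr (c (k+1)) - Fr (c k) := h1
          _ ≤ 1/ε := h2
      rw [mul_comm, ← le_div_iff₀ (Real.exp_pos _)] at h4
      calc c k - c (k+1) ≤ (1/ε) / Real.exp (ε * Fr a + k + M) := h4
        _ = (1/ε) * Real.exp (-(ε * Fr a + k + M)) := by
            rw [div_eq_mul_inv, ← Real.exp_neg]
        _ = (1/ε) * Real.exp (-(ε * Fr a + M)) * Real.exp (-(1:ℝ)) ^ k := by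
            rw [mul_assoc, ← Real.exp_nat_mul, ← Real.exp_add]
            congr 2
            push_cast
            ring
    have hsum : ∀ n : ℕ, a - c n ≤ (1/ε) * Real.exp (-(ε * Fr a + M)) * 2 := by
      intro n
      have h1 : a - c n = ∑ k ∈ Finset.range n, (c k - c (k+1)) := by
        rw [Finset.sum_range_sub' c n, hc0]
      rw [h1]
      have hq : (0:ℝ) ≤ (1/ε) * Real.exp (-(ε * Fr a + M)) := by positivity
      calc ∑ k ∈ Finset.range n, (c k - c (k+1))
          ≤ ∑ k ∈ Finset.range n, (1/ε) * Real.exp (-(ε * Fr a + M)) * Real.exp (-(1:ℝ)) ^ k :=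
            Finset.sum_le_sum (fun k _ => hgap k)
        _ = (1/ε) * Real.exp (-(ε * Fr a + M)) * ∑ k ∈ Finset.range n, Real.exp (-(1:ℝ)) ^ k := by
            rw [Finset.mul_sum]
        _ ≤ (1/ε) * Real.exp (-(ε * Fr a + M)) * ∑ k ∈ Finset.range n, (1/(2:ℝ)) ^ k := by
            apply mul_le_mul_of_nonneg_left _ hq
            apply Finset.sum_le_sum
            intro k _
            apply pow_le_pow_left₀ (Real.exp_pos _).le
            have h2 : (2:ℝ) ≤ Real.exp 1 := by
              have := Real.add_one_le_exp 1
              linarith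
            rw [Real.exp_neg, inv_le_comm₀ (Real.exp_pos _) (by norm_num : (0:ℝ) < 1/2)]
            norm_num
            linarith
        _ ≤ (1/ε) * Real.exp (-(ε * Fr a + M)) * 2 :=
            mul_le_mul_of_nonneg_left (sum_geometric_two_le n) hq
    -- bound exp(-(ε Fr a + M))
    have hεFra : 2 * Real.log (δ₀/a) ≤ ε * Fr a := by
      have h1 := hlow a ⟨ha0, haδ₀⟩
      have h2 := mul_le_mul_of_nonneg_left h1 hε.le
      have h3 : ε * ((2/ε) * Real.log (δ₀/a)) = 2 * Real.log (δ₀/a) := by field_simp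
      linarith [h2, h3.symm.le]
    have hexpFra : Real.exp (-(ε * Fr a)) ≤ (a/δ₀)^2 := by
      have h1 : -(ε * Fr a) ≤ Real.log ((a/δ₀)^2) := by
        rw [Real.log_pow]
        have h2 : Real.log (a/δ₀) = - Real.log (δ₀/a) := by
          rw [← Real.log_inv]
          congr 1
          rw [inv_div]
        push_cast
        rw [h2]
        linarith
      calc Real.exp (-(ε * Fr a)) ≤ Real.exp (Real.log ((a/δ₀)^2)) := Real.exp_le_exp.mpr h1
        _ = (a/δ₀)^2 := Real.exp_log (by positivity)
    have hclb : ∀ n, a/2 ≤ c n := by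
      intro n
      have h1 := hsum n
      have h2 : (1/ε) * Real.exp (-(ε * Fr a + M)) * 2
          ≤ (1/ε) * ((a/δ₀)^2 * (ε * δ₀^2/4)) * 2 := by
        apply mul_le_mul_of_nonneg_right _ (by norm_num)
        apply mul_le_mul_of_nonneg_left _ (by positivity)
        have h2a : Real.exp (-(ε * Fr a + M)) = Real.exp (-(ε * Fr a)) * Real.exp (-M) := by
          rw [← Real.exp_add]
          congr 1
          ring
        rw [h2a]
        exact mul_le_mul hexpFra hMexp (Real.exp_pos _).le (by positivity)
      have h3 : (1/ε) * ((a/δ₀)^2 * (ε * δ₀^2/4)) * 2 = a^2/2 := by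
        field_simp
        ring
      have h4 : a^2/2 ≤ a/2 := by nlinarith
      linarith
    have hcontra : ∀ n : ℕ, Fr a + n/ε ≤ Fr (a/2) := fun n =>
      le_trans (hc_ge n) (hFr_anti (a/2) (c n) (by positivity) (hclb n) ((hca n).trans ha1))
    obtain ⟨n, hn⟩ := exists_nat_gt (ε * (Fr (a/2) - Fr a))
    have h1 := hcontra n
    have h2 : (n:ℝ)/ε ≤ Fr (a/2) - Fr a := by linarith
    rw [div_le_iff₀ hε] at h2
    nlinarith
  -- build the sequence
  choose! Tf hTf1 hTf2 using key
  set T : ℕ → ℝ := fun n => Nat.rec (Tf δ₀) (fun _ prev => Tf (min δ₀ (prev/2))) n with hTdef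
  have hT0 : T 0 = Tf δ₀ := rfl
  have hTsucc : ∀ n, T (n+1) = Tf (min δ₀ (T n / 2)) := fun n => rfl
  have hδ₀mem : δ₀ ∈ Set.Ioc (0:ℝ) δ₀ := ⟨hδ₀pos, le_refl _⟩
  have hTinv : ∀ n, 0 < T n ∧ T n ≤ δ₀ := by
    intro n
    induction n with
    | zero =>
      have h0 := hTf1 δ₀ hδ₀mem
      exact ⟨h0.1, h0.2⟩
    | succ n ih =>
      have hmem : min δ₀ (T n / 2) ∈ Set.Ioc (0:ℝ) δ₀ :=
        ⟨lt_min hδ₀pos (by linarith [ih.1]), min_le_left _ _⟩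
      have h0 := hTf1 _ hmem
      rw [hTsucc n]
      exact ⟨h0.1, h0.2.trans (min_le_left _ _)⟩
  have hThalf : ∀ n, T (n+1) ≤ T n / 2 := by
    intro n
    have hmem : min δ₀ (T n / 2) ∈ Set.Ioc (0:ℝ) δ₀ :=
      ⟨lt_min hδ₀pos (by linarith [(hTinv n).1]), min_le_left _ _⟩
    rw [hTsucc n]
    exact (hTf1 _ hmem).2.trans (min_le_right _ _)
  have hTP : ∀ n, Real.log (1 / θ (T n)) ≤ ε * Fr (T n) + M := by
    intro n
    cases n with
    | zero => exact hTf2 δ₀ hδ₀mem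
    | succ n =>
      have hmem : min δ₀ (T n / 2) ∈ Set.Ioc (0:ℝ) δ₀ :=
        ⟨lt_min hδ₀pos (by linarith [(hTinv n).1]), min_le_left _ _⟩
      rw [hTsucc n]
      exact hTf2 _ hmem
  refine ⟨M, T, ?_, ?_, ?_, ?_⟩
  · exact fun i => ⟨(hTinv i).1, (hTinv i).2.trans hδ₀le1⟩
  · apply strictAnti_nat_of_succ_lt
    intro n
    have h1 := hThalf n
    have h2 := (hTinv n).1
    linarith
  · have hub : ∀ n, T n ≤ δ₀ * (1/2:ℝ)^n := by
      intro n
      induction n with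
      | zero => simpa using (hTinv 0).2
      | succ n ih =>
        calc T (n+1) ≤ T n / 2 := hThalf n
          _ ≤ (δ₀ * (1/2:ℝ)^n)/2 := by linarith
          _ = δ₀ * (1/2:ℝ)^(n+1) := by ring
    have h1 : Tendsto (fun n : ℕ => δ₀ * (1/2:ℝ)^n) atTop (𝓝 (δ₀ * 0)) :=
      (tendsto_pow_atTop_nhds_zero_of_lt_one (by norm_num) (by norm_num)).const_mul δ₀
    rw [mul_zero] at h1
    exact tendsto_of_tendsto_of_tendsto_of_le_of_le tendsto_const_nhds h1
      (fun n => (hTinv n).1.le) hub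
  · intro i
    have hTi : T i ∈ Set.Ioc (0:ℝ) 1 := ⟨(hTinv i).1, (hTinv i).2.trans hδ₀le1⟩
    have hP := hTP i
    have hFfin : ν (Set.Icc (T i) 1) ≠ ⊤ := hfin _ hTi
    rw [hFν _ hTi]
    have h2 : ENNReal.ofReal ε * ν (Set.Icc (T i) 1) = ENNReal.ofReal (ε * Fr (T i)) := by
      rw [ENNReal.ofReal_mul hε.le]
      congr 1
      exact (ENNReal.ofReal_toReal hFfin).symm
    rw [h2]
    calc ENNReal.ofReal (Real.log (1 / θ (T i))) ≤ ENNReal.ofReal (ε * Fr (T i) + M) :=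
          ENNReal.ofReal_le_ofReal hP
      _ ≤ ENNReal.ofReal (ε * Fr (T i)) + ENNReal.ofReal M := ENNReal.ofReal_add_le
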